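/- If x, x' ∈ [0,1) satisfy |D_j(x)| = |D_j(x')| for every j ≥ 1, then T(x) = T(x'). -/

import Mathlib

open Set

/-- `phi x` is the distance from `x` to the nearest integer. -/
noncomputable def phi (x : ℝ) : ℝ := min (Int.fract x) (1 - Int.fract x)

/-- The Takagi function. -/
noncomputable def T (x : ℝ) : ℝ := ∑' n : ℕ, (1/2 : ℝ)^n * phi (2^n * x)

/-- The `j`-th binary digit of `x ∈ [0,1)` (terminating expansion for dyadics). -/
noncomputable def eps (x : ℝ) (j : ℕ) : ℤ := ⌊2^j * x⌋ % 2

/-- `D k x = ∑_{j=1}^k (-1)^{ε_j(x)}`. -/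
noncomputable def D (k : ℕ) (x : ℝ) : ℤ :=
  ∑ j ∈ Finset.Icc 1 k, (-1 : ℤ)^((eps x j).toNat)

/-- `x₀` is a balanced dyadic rational of order `m`. -/
def BalancedDyadic (m : ℕ) (x₀ : ℝ) : Prop :=
  x₀ ∈ Set.Ico (0:ℝ) 1 ∧ (∃ k : ℕ, x₀ = (k : ℝ) / 4^m) ∧ D (2*m) x₀ = 0

/-- The generation of a balanced dyadic rational of order `m`. -/
noncomputable def generation (m : ℕ) (x₀ : ℝ) : ℕ :=
  ((Finset.Icc 1 (2*m)).filter (fun j => D j x₀ = 0)).card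

/-- The local level set of `x`. -/
def LocalLevelSet (x : ℝ) : Set ℝ :=
  {x' ∈ Set.Ico (0:ℝ) 1 | ∀ j : ℕ, |D j x'| = |D j x|}

/-- The level set of `T` at level `y`. -/
def L (y : ℝ) : Set ℝ := {x ∈ Set.Icc (0:ℝ) 1 | T x = y}

/-!
In binary, `2⁻ⁿ φ(2ⁿ x) = ∑_{m > n} [ε_{n+1} ≠ ε_{m+1}] 2^{-(m+1)}`; summing over `n` and
exchanging the order of summation gives `T x = ∑ₘ c_m 2^{-(m+1)}`, where `c_m` counts the digits
among `ε₁, …, ε_m` that differ from `ε_{m+1}`. In terms of the partial sums of signs,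
`4 c_m = 2m + 1 + D_m² - D_{m+1}²`, so `T x` only depends on the sequence `|D_j x|`.
-/

lemma eps_eq_zero_or_one (x : ℝ) (j : ℕ) : eps x j = 0 ∨ eps x j = 1 := by
  unfold eps; omega

lemma eps_fract_two_pow_mul (x : ℝ) (n j : ℕ) (hj : 1 ≤ j) :
    eps (Int.fract (2 ^ n * x)) j = eps x (n + j) := by
  obtain ⟨i, rfl⟩ := Nat.exists_eq_add_of_le hj
  have hshift : (2 : ℝ) ^ (1 + i) * Int.fract (2 ^ n * x)
      = 2 ^ (n + (1 + i)) * x - ((2 * (2 ^ i * ⌊2 ^ n * x⌋) : ℤ) : ℝ) := by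
    rw [Int.fract]; push_cast; ring
  unfold eps
  rw [hshift, Int.floor_sub_intCast]
  omega

lemma eps_succ_eq_digits {y : ℝ} (hy : 0 ≤ y) (i : ℕ) :
    (eps y (i + 1) : ℝ) = (Real.digits y 2 i : ℕ) := by
  rw [eps, Real.digits, Fin.val_ofNat, mul_comm, ← Int.natCast_floor_eq_floor (by positivity)]
  norm_cast

lemma hasSum_eps {y : ℝ} (hy : y ∈ Ico 0 1) :
    HasSum (fun i : ℕ => (eps y (i + 1) : ℝ) * (1 / 2) ^ (i + 1)) y := by
  convert Real.hasSum_ofDigitsTerm_digits y one_lt_two hy using 2 with i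
  rw [Real.ofDigitsTerm, eps_succ_eq_digits hy.1, one_div, inv_pow]
  norm_cast

lemma floor_two_mul_eq_eps_one {y : ℝ} (hy : y ∈ Ico 0 1) : ⌊2 * y⌋ = eps y 1 := by
  have h0 : 0 ≤ ⌊2 * y⌋ := Int.floor_nonneg.2 (by linarith [hy.1])
  have h1 : ⌊2 * y⌋ < 2 := Int.floor_lt.2 (by push_cast; linarith [hy.2])
  rw [eps, pow_one]
  omega

lemma phi_fract (z : ℝ) : phi (Int.fract z) = phi z := by
  rw [phi, phi, Int.fract_fract]

lemma phi_nonneg (z : ℝ) : 0 ≤ phi z :=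
  le_min (Int.fract_nonneg z) (by linarith [Int.fract_lt_one z])

lemma phi_le_one (z : ℝ) : phi z ≤ 1 :=
  (min_le_left _ _).trans (Int.fract_lt_one z).le

lemma hasSum_phi {y : ℝ} (hy : y ∈ Ico 0 1) :
    HasSum (fun j : ℕ => if 0 < j ∧ eps y (j + 1) ≠ eps y 1 then (1 / 2 : ℝ) ^ (j + 1) else 0)
      (phi y) := by
  have hphi : phi y = min y (1 - y) := by rw [phi, Int.fract_eq_self.2 hy]
  have hfloor := floor_two_mul_eq_eps_one hy
  rcases eps_eq_zero_or_one y 1 with h1 | h1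
  · have hlt : y < 1 / 2 := by
      have := Int.floor_eq_zero_iff.1 (hfloor.trans h1)
      linarith [this.2]
    rw [hphi, min_eq_left (by linarith)]
    refine (hasSum_eps hy).congr_fun fun j => ?_
    rcases eps_eq_zero_or_one y (j + 1) with h | h <;> rcases j.eq_zero_or_pos with rfl | hj <;>
      simp_all
  · have hge : 1 / 2 ≤ y := by
      have := Int.floor_eq_iff.1 (hfloor.trans h1)
      push_cast at this
      linarith [this.1]
    rw [hphi, min_eq_right (by linarith)]
    have hgeom : HasSum (fun j : ℕ => (1 / 2 : ℝ) ^ (j + 1)) 1 := by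
      simpa [pow_succ, mul_comm] using hasSum_geometric_two.mul_left (1 / 2 : ℝ)
    refine (hgeom.sub (hasSum_eps hy)).congr_fun fun j => ?_
    rcases eps_eq_zero_or_one y (j + 1) with h | h <;> rcases j.eq_zero_or_pos with rfl | hj <;>
      simp_all

noncomputable def mismatch (x : ℝ) (m : ℕ) : ℕ :=
  ((Finset.range m).filter fun i => eps x (i + 1) ≠ eps x (m + 1)).card

/-- The contribution of the digit pair `(n + 1, m + 1)` to the Takagi function. -/
noncomputable def takagiPairTerm (x : ℝ) (n m : ℕ) : ℝ :=
  if n < m ∧ eps x (n + 1) ≠ eps x (m + 1) then (1 / 2) ^ (m + 1) else 0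

lemma takagiPairTerm_nonneg (x : ℝ) (n m : ℕ) : 0 ≤ takagiPairTerm x n m := by
  unfold takagiPairTerm; split_ifs <;> positivity

lemma hasSum_takagiPairTerm_of_fst (x : ℝ) (n : ℕ) :
    HasSum (takagiPairTerm x n) ((1 / 2) ^ n * phi (2 ^ n * x)) := by
  have hy : Int.fract (2 ^ n * x) ∈ Ico 0 1 := ⟨Int.fract_nonneg _, Int.fract_lt_one _⟩
  have hshift := (hasSum_phi hy).mul_left ((1 / 2) ^ n)
  rw [phi_fract] at hshift
  rw [← (add_right_injective n).hasSum_iff]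
  · refine hshift.congr_fun fun j => ?_
    simp only [Function.comp_apply, takagiPairTerm, eps_fract_two_pow_mul x n _ le_rfl,
      eps_fract_two_pow_mul x n (j + 1) (by omega), lt_add_iff_pos_right, ← add_assoc, ne_comm,
      mul_ite, mul_zero, ← pow_add]
  · rintro m hm
    have : m < n := by
      by_contra! h
      exact hm ⟨m - n, Nat.add_sub_cancel' h⟩
    simp [takagiPairTerm, this.not_gt]

lemma hasSum_takagiPairTerm_of_snd (x : ℝ) (m : ℕ) :
    HasSum (fun n => takagiPairTerm x n m) (mismatch x m * (1 / 2) ^ (m + 1)) := by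
  have hsupp : ∀ n ∉ Finset.range m, takagiPairTerm x n m = 0 := fun n hn => by
    simp [takagiPairTerm, Finset.mem_range.not.1 hn]
  convert (hasSum_sum_of_ne_finset_zero hsupp : HasSum _ _) using 1
  rw [mismatch, Finset.card_filter, Nat.cast_sum, Finset.sum_mul]
  refine Finset.sum_congr rfl fun n hn => ?_
  simp [takagiPairTerm, Finset.mem_range.1 hn]

lemma T_eq_tsum_mismatch (x : ℝ) : T x = ∑' m, mismatch x m * (1 / 2 : ℝ) ^ (m + 1) := by
  have hrow n := (hasSum_takagiPairTerm_of_fst x n).tsum_eq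
  have hcol m := (hasSum_takagiPairTerm_of_snd x m).tsum_eq
  have hsummable : Summable (Function.uncurry (takagiPairTerm x)) := by
    refine (summable_prod_of_nonneg fun p => takagiPairTerm_nonneg x p.1 p.2).2
      ⟨fun n => (hasSum_takagiPairTerm_of_fst x n).summable, ?_⟩
    simp only [hrow]
    exact summable_geometric_two.of_nonneg_of_le
      (fun n => mul_nonneg (by positivity) (phi_nonneg _)) fun n => mul_le_of_le_one_right (by positivity) (phi_le_one _)
  simp only [T, ← hrow, ← hcol]
  exact hsummable.tsum_comm.symm

lemma D_eq_sum_range (x : ℝ) (m : ℕ) :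
    D m x = ∑ i ∈ Finset.range m, (-1 : ℤ) ^ (eps x (i + 1)).toNat := by
  rw [D, ← Finset.Ico_add_one_right_eq_Icc, Finset.sum_Ico_eq_sum_range, Nat.add_sub_cancel]
  simp only [add_comm 1]

lemma D_succ (x : ℝ) (m : ℕ) : D (m + 1) x = D m x + (-1 : ℤ) ^ (eps x (m + 1)).toNat :=
  Finset.sum_Icc_succ_top (by omega) _

/-- With signs `s i = (-1) ^ ε_i`, a mismatch with digit `m + 1` counts `(1 - s i * s (m + 1)) / 2`,
so `2 * mismatch x m = m - s (m + 1) * D m x`. -/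
lemma four_mul_mismatch (x : ℝ) (m : ℕ) :
    4 * (mismatch x m : ℤ) = 2 * m + 1 + D m x ^ 2 - D (m + 1) x ^ 2 := by
  set s : ℕ → ℤ := fun i => (-1) ^ (eps x i).toNat with hs
  have hsign : ∀ i,
      2 * (if eps x i ≠ eps x (m + 1) then (1 : ℤ) else 0) = 1 - s i * s (m + 1) := by
    intro i
    rcases eps_eq_zero_or_one x i with h | h <;>
      rcases eps_eq_zero_or_one x (m + 1) with h' | h' <;> simp [hs, h, h']
  have htwice : 2 * (mismatch x m : ℤ) = m - s (m + 1) * D m x := by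
    rw [mismatch, Finset.card_filter, Nat.cast_sum, Finset.mul_sum, D_eq_sum_range,
      Finset.sum_congr rfl fun i _ => by push_cast; exact hsign (i + 1), Finset.sum_sub_distrib,
      ← Finset.sum_mul]
    simp [hs, mul_comm]
  have hsq : s (m + 1) ^ 2 = 1 := by
    rcases eps_eq_zero_or_one x (m + 1) with h | h <;> simp [hs, h]
  have hsucc : D (m + 1) x = D m x + s (m + 1) := D_succ x m
  linear_combination 2 * htwice + (D (m + 1) x + D m x + s (m + 1)) * hsucc + hsq

lemma mismatch_eq_of_abs_D_eq {x x' : ℝ} (h : ∀ j : ℕ, 1 ≤ j → |D j x| = |D j x'|) (m : ℕ) :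
    mismatch x m = mismatch x' m := by
  have hsq : ∀ j, D j x ^ 2 = D j x' ^ 2 := by
    rintro (_ | j)
    · simp [D]
    · rw [← sq_abs, h _ (Nat.succ_pos j), sq_abs]
  have h4 := four_mul_mismatch x m
  rw [hsq, hsq, ← four_mul_mismatch x' m] at h4
  omega

theorem takagi_equivalence_implies_equal_general (x x' : ℝ)
    (h : ∀ j : ℕ, 1 ≤ j → |D j x| = |D j x'|) :
    T x = T x' := by
  simp only [T_eq_tsum_mismatch, mismatch_eq_of_abs_D_eq h]

theorem takagi_equivalence_implies_equal (x x' : ℝ)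
    (hx : x ∈ Set.Ico (0:ℝ) 1) (hx' : x' ∈ Set.Ico (0:ℝ) 1)
    (h : ∀ j : ℕ, 1 ≤ j → |D j x| = |D j x'|) :
    T x = T x' :=
  takagi_equivalence_implies_equal_general x x' h
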